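/- Stationarity of the Gibbs state: Let σ be an invertible density matrix (in particular, the Gibbs state σ = e^{−βH}/tr(e^{−βH}) of an n-qubit Hamiltonian). For any Hermitian matrix P, define the Lindbladian L^P(ρ) = −i[G^P, ρ] + A^P ρ (A^P)† − ½{(A^P)† A^P, ρ} with jump operator A^P = σ^{1/4} P σ^{−1/4} and coherent term defined in the eigenbasis of σ (eigenvalues σ_i) by G^P_{ij} = −i·((σ_i^{1/2} − σ_j^{1/2})/(2·σ_i^{1/4}·σ_j^{1/4}·(σ_i^{1/2} + σ_j^{1/2})))·Σ_k σ_k^{1/2} P_{ik} P_{kj}. Then L^P(σ) = 0; consequently the balanced Lindbladian L* = Σ_{j=1}^n Σ_{P∈P_j} L^P satisfies L*(σ) = 0. -/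

import Mathlib

open scoped BigOperators
open Classical
open scoped ComplexOrder

noncomputable section

/-- Index type for the standard basis of the `n`-qubit Hilbert space `(ℂ²)^{⊗n}`. -/
abbrev QIdx (n : ℕ) := Fin n → Fin 2

/-- Operators (matrices) on the `n`-qubit Hilbert space `(ℂ²)^{⊗n}`. -/
abbrev QMat (n : ℕ) := Matrix (QIdx n) (QIdx n) ℂ

/-- The trace norm (Schatten 1-norm) of a matrix: `‖A‖₁ = tr √(AᴴA)`. -/
noncomputable def traceNorm {I : Type} [Fintype I] [DecidableEq I] (A : Matrix I I ℂ) : ℝ :=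
  (((Matrix.posSemidef_conjTranspose_mul_self A).1.eigenvectorUnitary : Matrix I I ℂ) *
    Matrix.diagonal (((↑) : ℝ → ℂ) ∘ Real.sqrt ∘ (Matrix.posSemidef_conjTranspose_mul_self A).1.eigenvalues) *
    (star (Matrix.posSemidef_conjTranspose_mul_self A).1.eigenvectorUnitary : Matrix I I ℂ)).trace.re

/-- The operator norm (spectral norm) of a complex matrix. -/
noncomputable def opNorm {I : Type} [Fintype I] [DecidableEq I] (A : Matrix I I ℂ) : ℝ :=
  ‖Matrix.toEuclideanCLM (𝕜 := ℂ) A‖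

/-- The partial trace of an `n`-qubit operator over the qubit at site `i`, as an operator
on the remaining qubits. -/
noncomputable def ptraceSite {n : ℕ} (i : Fin n) (X : QMat n) :
    Matrix ({j : Fin n // j ≠ i} → Fin 2) ({j : Fin n // j ≠ i} → Fin 2) ℂ :=
  fun a b => ∑ s : Fin 2,
    X (fun j => if h : j = i then s else a ⟨j, h⟩) (fun j => if h : j = i then s else b ⟨j, h⟩)

/-- A transport plan for a (traceless Hermitian) operator `X`: a decomposition
`X = Σ_i X_i` into Hermitian matrices with `tr_i(X_i) = 0`. -/
structure IsTransportPlan {n : ℕ} (X : QMat n) (Xs : Fin n → QMat n) : Prop where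
  herm : ∀ i, (Xs i).IsHermitian
  traceless : ∀ i, (Xs i).trace = 0
  sum_eq : ∑ i, Xs i = X
  ptrace_eq : ∀ i, ptraceSite i (Xs i) = 0

/-- The quantum Wasserstein norm of order 1 of De Palma–Marvian–Trevisan–Lloyd. -/
noncomputable def wnorm {n : ℕ} (X : QMat n) : ℝ :=
  sInf {c : ℝ | ∃ Xs : Fin n → QMat n, IsTransportPlan X Xs ∧ c = ∑ i, traceNorm (Xs i) / 2}

/-- A density matrix: positive semidefinite with unit trace. -/
def IsDensity {n : ℕ} (ρ : QMat n) : Prop := ρ.PosSemidef ∧ ρ.trace = 1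

/-- The Dobrushin influence matrix of a map `Φ = Φ₁ + ⋯ + Φ_n`:
`D_{ij} = max { ‖Φ_i(ρ − ϱ)‖_{W1} : ρ, ϱ density matrices with tr_j(ρ − ϱ) = 0 }`. -/
noncomputable def dobrushin {n : ℕ} (Φs : Fin n → (QMat n → QMat n)) :
    Matrix (Fin n) (Fin n) ℝ :=
  fun i j => sSup {w : ℝ | ∃ ρ ϱ : QMat n, IsDensity ρ ∧ IsDensity ϱ ∧
    ptraceSite j (ρ - ϱ) = 0 ∧ w = wnorm (Φs i (ρ - ϱ))}

/-- The `1 → 1` norm of a real matrix: the maximum column `ℓ₁`-norm. -/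
noncomputable def norm11 {n : ℕ} (D : Matrix (Fin n) (Fin n) ℝ) : ℝ :=
  ⨆ j, ∑ i, |D i j|

/-- `Q` is an update matrix for `Φ` if `Φ` maps any transport plan with cost vector `x`
to a transport plan with cost vector entrywise at most `Q x`. -/
def IsUpdateMatrix {n : ℕ} (Q : Matrix (Fin n) (Fin n) ℝ) (Φ : QMat n → QMat n) : Prop :=
  ∀ (X : QMat n) (Xs : Fin n → QMat n), IsTransportPlan X Xs →
    ∃ Ys : Fin n → QMat n, IsTransportPlan (Φ X) Ys ∧
      ∀ j, traceNorm (Ys j) / 2 ≤ Q.mulVec (fun i => traceNorm (Xs i) / 2) j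

/-! ### Hamiltonian combinatorics -/

/-- `M` is supported on the set of qubits `S` (i.e. `M = M_S ⊗ Id`). -/
def SupportedOn {n : ℕ} (S : Finset (Fin n)) (M : QMat n) : Prop :=
  (∀ a b : QIdx n, (∃ j, j ∉ S ∧ a j ≠ b j) → M a b = 0) ∧
  (∀ a b a' b' : QIdx n, (∀ j ∈ S, a j = a' j) → (∀ j ∈ S, b j = b' j) →
     (∀ j ∉ S, a j = b j) → (∀ j ∉ S, a' j = b' j) → M a b = M a' b')

/-- The support of an operator: the minimal set of qubits on which it acts nontrivially. -/
noncomputable def supp {n : ℕ} (M : QMat n) : Finset (Fin n) :=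
  (Finset.univ.filter fun S : Finset (Fin n) => SupportedOn S M).inf id

/-- The interaction graph of a local Hamiltonian: two distinct sites are adjacent iff
some term's support contains both. -/
def interGraph {n m : ℕ} (Hterm : Fin m → QMat n) : SimpleGraph (Fin n) where
  Adj i j := i ≠ j ∧ ∃ a, i ∈ supp (Hterm a) ∧ j ∈ supp (Hterm a)
  symm := by
    constructor
    rintro i j ⟨hij, a, hi, hj⟩
    exact ⟨hij.symm, a, hj, hi⟩
  loopless := by
    constructor
    rintro i ⟨hii, -⟩
    exact hii rfl

/-- The graph distance on sites induced by the interaction hypergraph. -/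
noncomputable def hamDist {n m : ℕ} (Hterm : Fin m → QMat n) (i j : Fin n) : ℕ :=
  (interGraph Hterm).dist i j

/-- The ball of radius `r` around site `i` in the interaction graph distance. -/
noncomputable def ballH {n m : ℕ} (Hterm : Fin m → QMat n) (i : Fin n) (r : ℕ) :
    Finset (Fin n) :=
  Finset.univ.filter fun j => hamDist Hterm i j ≤ r

/-- Distance from a site to a set of sites. -/
noncomputable def distToSet {n m : ℕ} (Hterm : Fin m → QMat n) (j : Fin n)
    (S : Finset (Fin n)) : ℕ :=
  sInf {r : ℕ | ∃ i ∈ S, hamDist Hterm j i = r}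

/-- Distance between two sets of sites. -/
noncomputable def setDist {n m : ℕ} (Hterm : Fin m → QMat n) (S T : Finset (Fin n)) : ℕ :=
  sInf {r : ℕ | ∃ i ∈ S, ∃ j ∈ T, hamDist Hterm i j = r}

/-- For `S ⊆ [n]`, the real matrix `E_S` with `(E_S)_{uv} = 1` iff `u, v ∈ S`. -/
def ESet {n : ℕ} (S : Finset (Fin n)) : Matrix (Fin n) (Fin n) ℝ :=
  fun u v => if u ∈ S ∧ v ∈ S then 1 else 0

/-- `S_a`: the union of the supports of the terms appearing in the sequence `a`. -/
noncomputable def SOf {n m : ℕ} (Hterm : Fin m → QMat n) {s : ℕ} (a : Fin s → Fin m) :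
    Finset (Fin n) :=
  Finset.univ.biUnion fun ℓ => supp (Hterm (a ℓ))

/-- `a` is a cluster from the set `S₀`: each term's support intersects `S₀` together with
the supports of the previous terms. -/
def IsClusterFrom {n m : ℕ} (Hterm : Fin m → QMat n) (S0 : Finset (Fin n)) {s : ℕ}
    (a : Fin s → Fin m) : Prop :=
  ∀ ℓ : Fin s, ∃ j ∈ supp (Hterm (a ℓ)),
    j ∈ S0 ∨ ∃ p : Fin s, p < ℓ ∧ j ∈ supp (Hterm (a p))

/-- The ball of radius `r` around a set of sites. -/
noncomputable def ballOfSet {n m : ℕ} (Hterm : Fin m → QMat n) (S : Finset (Fin n)) (r : ℕ) :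
    Finset (Fin n) :=
  Finset.univ.filter fun j => distToSet Hterm j S ≤ r

/-! ### Matrix exponentials, Gibbs states, and the balanced Lindbladian -/

/-- The matrix exponential, via its power series. -/
noncomputable def mexp {I : Type} [Fintype I] [DecidableEq I] (A : Matrix I I ℂ) :
    Matrix I I ℂ :=
  ∑' k : ℕ, ((k.factorial : ℂ)⁻¹ • A ^ k)

/-- The Gibbs state `σ = e^{−βH} / tr(e^{−βH})` at inverse temperature `β`. -/
noncomputable def gibbs {I : Type} [Fintype I] [DecidableEq I] (β : ℝ) (H : Matrix I I ℂ) :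
    Matrix I I ℂ :=
  (mexp ((-β : ℂ) • H)).trace⁻¹ • mexp ((-β : ℂ) • H)

/-- The real power `A^r` of a Hermitian matrix, via its spectral decomposition. -/
noncomputable def hermPow {I : Type} [Fintype I] [DecidableEq I] (A : Matrix I I ℂ) (r : ℝ) :
    Matrix I I ℂ :=
  if h : A.IsHermitian then
    (h.eigenvectorUnitary : Matrix I I ℂ) *
      Matrix.diagonal (fun i => ((h.eigenvalues i ^ r : ℝ) : ℂ)) *
      star (h.eigenvectorUnitary : Matrix I I ℂ)
  else 0

/-- The coherent term `G^P` of the balanced Lindbladian, defined in the eigenbasis of `σ`. -/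
noncomputable def coherentG {I : Type} [Fintype I] [DecidableEq I] (σ P : Matrix I I ℂ) :
    Matrix I I ℂ :=
  if h : σ.IsHermitian then
    let U : Matrix I I ℂ := h.eigenvectorUnitary
    let lam : I → ℝ := h.eigenvalues
    let P' : Matrix I I ℂ := star U * P * U
    let w : I → I → ℝ := fun i j =>
      (lam i ^ ((1:ℝ)/2) - lam j ^ ((1:ℝ)/2)) /
        (2 * lam i ^ ((1:ℝ)/4) * lam j ^ ((1:ℝ)/4) *
          (lam i ^ ((1:ℝ)/2) + lam j ^ ((1:ℝ)/2)))
    let G' : Matrix I I ℂ := Matrix.of (fun i j =>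
      (-Complex.I) * ((w i j : ℝ) : ℂ) *
        (∑ t, ((lam t ^ ((1:ℝ)/2) : ℝ) : ℂ) * P' i t * P' t j))
    U * G' * star U
  else 0

/-- The jump operator `A^P = σ^{1/4} P σ^{−1/4}`. -/
noncomputable def jumpA {I : Type} [Fintype I] [DecidableEq I] (σ P : Matrix I I ℂ) :
    Matrix I I ℂ :=
  hermPow σ ((1:ℝ)/4) * P * hermPow σ (-((1:ℝ)/4))

/-- The Lindblad generator `ρ ↦ −i[G,ρ] + AρA† − ½{A†A, ρ}` as a linear endomorphism. -/
noncomputable def lindbladOp {I : Type} [Fintype I] [DecidableEq I] (G A : Matrix I I ℂ) :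
    Module.End ℂ (Matrix I I ℂ) :=
  (-Complex.I) • (LinearMap.mulLeft ℂ G - LinearMap.mulRight ℂ G)
    + (LinearMap.mulRight ℂ (star A)) ∘ₗ (LinearMap.mulLeft ℂ A)
    - ((1:ℂ)/2) • (LinearMap.mulLeft ℂ (star A * A) + LinearMap.mulRight ℂ (star A * A))

/-- The balanced Lindbladian `L^P` for jump `P` with invariant state `σ`. -/
noncomputable def LP {I : Type} [Fintype I] [DecidableEq I] (σ P : Matrix I I ℂ) :
    Module.End ℂ (Matrix I I ℂ) :=
  lindbladOp (coherentG σ P) (jumpA σ P)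

/-- The three nonidentity single-qubit Pauli matrices. -/
noncomputable def pauli1 : Fin 3 → Matrix (Fin 2) (Fin 2) ℂ :=
  ![!![0, 1; 1, 0], !![0, -Complex.I; Complex.I, 0], !![1, 0; 0, -1]]

/-- The Pauli matrix `σ_p` acting at site `j` of an `n`-qubit system. -/
noncomputable def pauliAt {n : ℕ} (j : Fin n) (p : Fin 3) : QMat n :=
  fun a b => (if ∀ l, l ≠ j → a l = b l then 1 else 0) * pauli1 p (a j) (b j)

/-- The site-`j` balanced Lindbladian `L_j* = Σ_{P ∈ P_j} L^P`. -/
noncomputable def siteL {n : ℕ} (σ : QMat n) (j : Fin n) : Module.End ℂ (QMat n) :=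
  ∑ p : Fin 3, LP σ (pauliAt j p)

/-- The balanced Lindbladian `L* = Σ_j L_j*`. -/
noncomputable def fullL {n : ℕ} (σ : QMat n) : Module.End ℂ (QMat n) :=
  ∑ j, siteL σ j

/-- The quantum dynamical semigroup `e^{L}` generated by a Lindbladian, applied to a state. -/
noncomputable def superExp {n : ℕ} (L : Module.End ℂ (QMat n)) (ρ : QMat n) : QMat n :=
  ∑' k : ℕ, ((k.factorial : ℂ)⁻¹ • (L ^ k) ρ)

/-! ### Entropic quantities -/

/-- The von Neumann entropy `S(ρ) = −tr(ρ log ρ)` of a (Hermitian) matrix. -/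
noncomputable def vnEntropy {I : Type} [Fintype I] [DecidableEq I] (ρ : Matrix I I ℂ) : ℝ :=
  if h : ρ.IsHermitian then -∑ i, h.eigenvalues i * Real.log (h.eigenvalues i) else 0

/-- The reduced operator on the subsystem `S`: the partial trace over the complement of `S`. -/
noncomputable def reduceTo {n : ℕ} (S : Finset (Fin n)) (X : QMat n) :
    Matrix ({j : Fin n // j ∈ S} → Fin 2) ({j : Fin n // j ∈ S} → Fin 2) ℂ :=
  fun a b => ∑ c : {j : Fin n // j ∉ S} → Fin 2,
    X (fun j => if h : j ∈ S then a ⟨j, h⟩ else c ⟨j, h⟩)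
      (fun j => if h : j ∈ S then b ⟨j, h⟩ else c ⟨j, h⟩)

/-!
Every operator in `L^P(σ)` is conjugated by the same unitary eigenbasis `U` of `σ`, and the
Lindblad form commutes with the ⋆-automorphism `X ↦ U X U†`, so it suffices to treat
`σ = diag(λ)`. Put `x_i = λ_i^{1/4}` and `M = Q σ^{1/2} Q`, where `Q = U† P U`. Then each term of
`L^P(σ)` is `M` multiplied entrywise by a scalar matrix, and the `(i, j)` scalars of the coherent,
jump and anticommutator terms add up to
`(x_i² − x_j²)² / (2 x_i x_j) + x_i x_j − (x_i⁴ + x_j⁴) / (2 x_i x_j) = 0`.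
-/

open Matrix Unitary

section Lindblad

variable {I : Type} [Fintype I] [DecidableEq I]

theorem lindbladOp_apply (G A ρ : Matrix I I ℂ) :
    lindbladOp G A ρ = -Complex.I • (G * ρ - ρ * G) + A * ρ * star A
      - (1 / 2 : ℂ) • (star A * A * ρ + ρ * (star A * A)) := by
  simp [lindbladOp, mul_assoc]

theorem map_lindbladOp {J F : Type} [Fintype J] [DecidableEq J]
    [FunLike F (Matrix I I ℂ) (Matrix J J ℂ)] [AlgHomClass F ℂ (Matrix I I ℂ) (Matrix J J ℂ)]
    [StarHomClass F (Matrix I I ℂ) (Matrix J J ℂ)] (φ : F) (G A ρ : Matrix I I ℂ) :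
    φ (lindbladOp G A ρ) = lindbladOp (φ G) (φ A) (φ ρ) := by
  simp only [lindbladOp_apply, map_sub, map_add, map_smul, map_mul, map_star]

end Lindblad

def coherentWeight (a b : ℝ) : ℝ :=
  (a ^ ((1:ℝ)/2) - b ^ ((1:ℝ)/2)) /
    (2 * a ^ ((1:ℝ)/4) * b ^ ((1:ℝ)/4) * (a ^ ((1:ℝ)/2) + b ^ ((1:ℝ)/2)))

theorem coherentWeight_mul_sub {a b : ℝ} (ha : 0 < a) (hb : 0 < b) :
    coherentWeight a b * (a - b) =
      (a ^ (-((1:ℝ)/4)) * b ^ ((3:ℝ)/4) + a ^ ((3:ℝ)/4) * b ^ (-((1:ℝ)/4))) / 2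
        - a ^ ((1:ℝ)/4) * b ^ ((1:ℝ)/4) := by
  have pow_eq {c : ℝ} (hc : 0 < c) : c = (c ^ ((1:ℝ)/4)) ^ 4 ∧
      c ^ ((1:ℝ)/2) = (c ^ ((1:ℝ)/4)) ^ 2 ∧ c ^ ((3:ℝ)/4) = (c ^ ((1:ℝ)/4)) ^ 3 ∧
      c ^ (-((1:ℝ)/4)) = (c ^ ((1:ℝ)/4))⁻¹ := by
    refine ⟨?_, ?_, ?_, Real.rpow_neg hc.le _⟩ <;>
      rw [← Real.rpow_natCast, ← Real.rpow_mul hc.le] <;> norm_num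
  obtain ⟨ha4, ha2, ha3, ham⟩ := pow_eq ha
  obtain ⟨hb4, hb2, hb3, hbm⟩ := pow_eq hb
  have hx : 0 < a ^ ((1:ℝ)/4) := by positivity
  have hy : 0 < b ^ ((1:ℝ)/4) := by positivity
  rw [coherentWeight, ha2, ha3, ham, hb2, hb3, hbm]
  generalize a ^ ((1:ℝ)/4) = x at *
  generalize b ^ ((1:ℝ)/4) = y at *
  subst ha4 hb4
  field_simp
  ring

section Diagonal

variable {I : Type} [DecidableEq I]

def diagRpow (lam : I → ℝ) (r : ℝ) : Matrix I I ℂ :=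
  diagonal fun i => ((lam i ^ r : ℝ) : ℂ)

theorem star_diagRpow (lam : I → ℝ) (r : ℝ) : star (diagRpow lam r) = diagRpow lam r := by
  simp [diagRpow, star_eq_conjTranspose, diagonal_conjTranspose]

variable [Fintype I]

theorem diagRpow_mul_diagRpow {lam : I → ℝ} (hlam : ∀ i, 0 < lam i) (r s : ℝ) :
    diagRpow lam r * diagRpow lam s = diagRpow lam (r + s) := by
  simp only [diagRpow, diagonal_mul_diagonal, ← Complex.ofReal_mul, ← Real.rpow_add (hlam _)]

theorem diagRpow_mul_diagRpow_mul {lam : I → ℝ} (hlam : ∀ i, 0 < lam i) (r s : ℝ)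
    (M : Matrix I I ℂ) : diagRpow lam r * (diagRpow lam s * M) = diagRpow lam (r + s) * M := by
  rw [← mul_assoc, diagRpow_mul_diagRpow hlam]

theorem diagRpow_mul_mul_diagRpow_apply (lam : I → ℝ) (r s : ℝ) (M : Matrix I I ℂ) (i j : I) :
    (diagRpow lam r * M * diagRpow lam s) i j = (lam i ^ r : ℝ) * M i j * (lam j ^ s : ℝ) := by
  simp [diagRpow, diagonal_mul, mul_diagonal]

def coherentDiag (lam : I → ℝ) (Q : Matrix I I ℂ) : Matrix I I ℂ :=
  of fun i j => -Complex.I * ((coherentWeight (lam i) (lam j) : ℝ) : ℂ) *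
    ∑ t, ((lam t ^ ((1:ℝ)/2) : ℝ) : ℂ) * Q i t * Q t j

theorem coherentDiag_apply (lam : I → ℝ) (Q : Matrix I I ℂ) (i j : I) :
    coherentDiag lam Q i j =
      -Complex.I * (coherentWeight (lam i) (lam j) : ℂ) * (Q * diagRpow lam (1/2) * Q) i j := by
  rw [coherentDiag, of_apply, mul_apply]
  simp only [diagRpow, mul_diagonal]
  congr 1
  exact Finset.sum_congr rfl fun t _ => by ring

theorem lindbladOp_coherentDiag_diagRpow {lam : I → ℝ} (hlam : ∀ i, 0 < lam i)
    {Q : Matrix I I ℂ} (hQ : Q.IsHermitian) :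
    lindbladOp (coherentDiag lam Q) (diagRpow lam (1/4) * Q * diagRpow lam (-(1/4)))
      (diagRpow lam 1) = 0 := by
  set A := diagRpow lam (1/4) * Q * diagRpow lam (-(1/4)) with hA
  set M := Q * diagRpow lam (1/2) * Q with hM
  have hstar : star A = diagRpow lam (-(1/4)) * Q * diagRpow lam (1/4) := by
    rw [hA, star_mul, star_mul, star_diagRpow, star_diagRpow, show star Q = Q from hQ, mul_assoc]
  have merge := diagRpow_mul_diagRpow_mul hlam
  have merge' := diagRpow_mul_diagRpow hlam
  have hjump : A * diagRpow lam 1 * star A = diagRpow lam (1/4) * M * diagRpow lam (1/4) := by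
    rw [hstar, hA, hM]; simp only [mul_assoc, merge, merge']; norm_num
  have hleft : star A * A * diagRpow lam 1 = diagRpow lam (-(1/4)) * M * diagRpow lam (3/4) := by
    rw [hstar, hA, hM]; simp only [mul_assoc, merge, merge']; norm_num
  have hright :
      diagRpow lam 1 * (star A * A) = diagRpow lam (3/4) * M * diagRpow lam (-(1/4)) := by
    rw [hstar, hA, hM]; simp only [mul_assoc, merge]; norm_num
  rw [lindbladOp_apply, hjump, hleft, hright]
  ext i j
  simp only [Matrix.sub_apply, Matrix.add_apply, Matrix.smul_apply, Matrix.zero_apply, smul_eq_mul,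
    diagRpow_mul_mul_diagRpow_apply]
  rw [diagRpow, mul_diagonal, diagonal_mul, coherentDiag_apply]
  simp only [Real.rpow_one]
  have balance := congrArg ((↑) : ℝ → ℂ) (coherentWeight_mul_sub (hlam i) (hlam j))
  push_cast at balance
  linear_combination M i j * balance
    + (coherentWeight (lam i) (lam j) : ℂ) * M i j * (lam j - lam i) * Complex.I_mul_I

end Diagonal

section Spectral

variable {I : Type} [Fintype I] [DecidableEq I] {σ : Matrix I I ℂ}

theorem hermPow_eq_conjStarAlgAut (hσ : σ.IsHermitian) (r : ℝ) :
    hermPow σ r = conjStarAlgAut ℂ _ hσ.eigenvectorUnitary (diagRpow hσ.eigenvalues r) := by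
  rw [hermPow, dif_pos hσ]
  rfl

theorem eq_conjStarAlgAut_diagRpow_one (hσ : σ.IsHermitian) :
    σ = conjStarAlgAut ℂ _ hσ.eigenvectorUnitary (diagRpow hσ.eigenvalues 1) := by
  conv_lhs => rw [hσ.spectral_theorem]
  simp only [diagRpow, Real.rpow_one]
  rfl

theorem coherentG_eq_conjStarAlgAut (hσ : σ.IsHermitian) (P : Matrix I I ℂ) :
    coherentG σ P = conjStarAlgAut ℂ _ hσ.eigenvectorUnitary
      (coherentDiag hσ.eigenvalues ((conjStarAlgAut ℂ _ hσ.eigenvectorUnitary).symm P)) := by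
  rw [coherentG, dif_pos hσ]
  rfl

theorem jumpA_eq_conjStarAlgAut (hσ : σ.IsHermitian) (P : Matrix I I ℂ) :
    jumpA σ P = conjStarAlgAut ℂ _ hσ.eigenvectorUnitary
      (diagRpow hσ.eigenvalues (1/4) * (conjStarAlgAut ℂ _ hσ.eigenvectorUnitary).symm P *
        diagRpow hσ.eigenvalues (-(1/4))) := by
  rw [jumpA, hermPow_eq_conjStarAlgAut hσ, hermPow_eq_conjStarAlgAut hσ, map_mul, map_mul,
    StarAlgEquiv.apply_symm_apply]

theorem LP_apply_self (hσ : σ.PosDef) {P : Matrix I I ℂ} (hP : P.IsHermitian) :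
    LP σ P σ = 0 := by
  set φ := conjStarAlgAut ℂ _ hσ.1.eigenvectorUnitary
  have hQ : (φ.symm P).IsHermitian := by
    rw [IsHermitian, ← star_eq_conjTranspose, ← map_star, star_eq_conjTranspose, hP.eq]
  rw [LP, coherentG_eq_conjStarAlgAut hσ.1, jumpA_eq_conjStarAlgAut hσ.1]
  -- only the state argument: `σ` also occurs inside the proof terms `hσ.1`
  conv_lhs => arg 2; rw [eq_conjStarAlgAut_diagRpow_one hσ.1]
  rw [← map_lindbladOp, lindbladOp_coherentDiag_diagRpow hσ.eigenvalues_pos hQ, map_zero]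

end Spectral

theorem pauli1_isHermitian (p : Fin 3) : (pauli1 p).IsHermitian := by
  fin_cases p <;> ext i j <;> fin_cases i <;> fin_cases j <;> simp [pauli1, conjTranspose_apply]

theorem pauliAt_isHermitian {n : ℕ} (j : Fin n) (p : Fin 3) : (pauliAt j p).IsHermitian := by
  ext a b
  simp only [conjTranspose_apply, pauliAt, star_mul', (pauli1_isHermitian p).apply]
  simp [eq_comm]

theorem stationarity_of_gibbs_state_general
    (n : ℕ) (σ : QMat n) (hσpos : σ.PosDef) :
    (∀ P : QMat n, P.IsHermitian → (LP σ P) σ = 0) ∧ (fullL σ) σ = 0 := by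
  refine ⟨fun P hP => LP_apply_self hσpos hP, ?_⟩
  simp only [fullL, siteL, LinearMap.sum_apply]
  exact Finset.sum_eq_zero fun j _ => Finset.sum_eq_zero fun p _ =>
    LP_apply_self hσpos (pauliAt_isHermitian j p)

/-- **Stationarity of the Gibbs state**: for any invertible density matrix `σ` and Hermitian
`P`, the balanced Lindbladian `L^P` annihilates `σ`; consequently so does `L* = Σ_j Σ_P L^P`. -/
theorem stationarity_of_gibbs_state
    (n : ℕ) (σ : QMat n) (hσpos : σ.PosDef) (hσtr : σ.trace = 1) :
    (∀ P : QMat n, P.IsHermitian → (LP σ P) σ = 0) ∧ (fullL σ) σ = 0 :=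
  stationarity_of_gibbs_state_general n σ hσpos
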